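/- Let λ > μ > 0 (or μ ≥ 0) and T ≥ log(2)/(λ−μ), and let Y_T have the distribution of a supercritical linear birth-death process at time T with initial value 1. Then E[1/√Y_T | Y_T > 0] ≤ e^{−(λ−μ)T/2} · √((2(λ−μ)/λ)(log(λ/(λ−μ)) + (λ−μ)T)). -/

import Mathlib

open Real

/-!
Conditionally on `Y_T > 0`, `Y_T` is geometric on `{1, 2, …}` with ratio `q = λ p̃(T)`.
By Cauchy–Schwarz (Jensen for `√`), `E[1/√Y | Y > 0] ≤ √(E[1/Y | Y > 0])`, and the logarithm
series gives `E[1/Y | Y > 0] = (1 - q)/q · (-log (1 - q))` exactly. Writing `E = e^{(λ-μ)T}`, one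
has `(1 - q)/q = (λ-μ)/(λ(E-1)) ≤ 2(λ-μ)/(λE)` because `E ≥ 2`, and
`-log (1 - q) = log ((λE-μ)/(λ-μ)) ≤ log (λE/(λ-μ))` because `μ ≥ 0`.
-/

theorem tsum_sqrt_mul_sqrt_le {ι : Type*} {f g : ι → ℝ} (hf : ∀ i, 0 ≤ f i)
    (hg : ∀ i, 0 ≤ g i) (hfs : Summable f) (hgs : Summable g) :
    ∑' i, √(f i) * √(g i) ≤ √(∑' i, f i) * √(∑' i, g i) :=
  tsum_le_of_sum_le' (by positivity) fun s =>
    (sum_sqrt_mul_sqrt_le s hf hg).trans <| mul_le_mul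
      (sqrt_le_sqrt (hfs.sum_le_tsum s fun i _ => hf i))
      (sqrt_le_sqrt (hgs.sum_le_tsum s fun i _ => hg i)) (sqrt_nonneg _) (sqrt_nonneg _)

theorem tsum_div_sqrt_le_sqrt_tsum_div {ι : Type*} {w x : ι → ℝ} (hw : ∀ i, 0 ≤ w i)
    (hx : ∀ i, 0 ≤ x i) (hw1 : HasSum w 1) (hwx : Summable fun i => w i / x i) :
    ∑' i, w i / √(x i) ≤ √(∑' i, w i / x i) := by
  have hsplit : ∀ i, w i / √(x i) = √(w i) * √(w i / x i) := fun i => by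
    rw [← sqrt_mul (hw i), ← mul_div_assoc, ← sq, sqrt_div (sq_nonneg _), sqrt_sq (hw i)]
  simpa only [hsplit, hw1.tsum_eq, sqrt_one, one_mul] using
    tsum_sqrt_mul_sqrt_le hw (fun i => div_nonneg (hw i) (hx i)) hw1.summable hwx

theorem hasSum_pow_div_succ {q : ℝ} (hq0 : q ≠ 0) (hq : |q| < 1) :
    HasSum (fun n : ℕ => q ^ n / (n + 1)) (-log (1 - q) / q) := by
  refine ((hasSum_pow_div_log_of_abs_lt_one hq).div_const q).congr_fun fun n => ?_
  field_simp
  ring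

theorem hasSum_one_sub_mul_geometric {q : ℝ} (hq0 : 0 ≤ q) (hq1 : q < 1) :
    HasSum (fun n : ℕ => (1 - q) * q ^ n) 1 := by
  simpa [mul_inv_cancel₀ (sub_ne_zero.2 hq1.ne')] using
    (hasSum_geometric_of_lt_one hq0 hq1).mul_left (1 - q)

theorem tsum_geometric_div_sqrt_succ_le {q : ℝ} (hq0 : 0 < q) (hq1 : q < 1) :
    ∑' n : ℕ, (1 - q) * q ^ n / √((n : ℝ) + 1) ≤ √((1 - q) / q * -log (1 - q)) := by
  have hlog : HasSum (fun n : ℕ => (1 - q) * q ^ n / (n + 1)) ((1 - q) / q * -log (1 - q)) := by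
    rw [div_mul_eq_mul_div]
    simpa only [mul_div_assoc] using
      (hasSum_pow_div_succ hq0.ne' (abs_lt.2 ⟨by linarith, hq1⟩)).mul_left (1 - q)
  rw [← hlog.tsum_eq]
  exact tsum_div_sqrt_le_sqrt_tsum_div (fun n => mul_nonneg (by linarith) (by positivity))
    (fun n => by positivity) (hasSum_one_sub_mul_geometric hq0.le hq1) hlog.summable

/-- The paper's `p̃(T)`, written in terms of `E = e^{(λ-μ)T}`. -/
noncomputable def ptilde (lam mu E : ℝ) : ℝ := (E - 1) / (lam * E - mu)

section ptilde

variable {lam mu E : ℝ}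

theorem one_sub_mul_ptilde (h : lam * E - mu ≠ 0) :
    1 - lam * ptilde lam mu E = (lam - mu) / (lam * E - mu) := by
  unfold ptilde
  field_simp
  ring

theorem one_sub_mul_ptilde_div_mul_ptilde (hlam : lam ≠ 0) (hE : E ≠ 1) (h : lam * E - mu ≠ 0) :
    (1 - lam * ptilde lam mu E) / (lam * ptilde lam mu E) = (lam - mu) / (lam * (E - 1)) := by
  rw [one_sub_mul_ptilde h, ptilde]
  field_simp [sub_ne_zero.2 hE]

theorem ptilde_pos (hlam : 0 < lam) (hlm : mu < lam) (hE : 1 < E) : 0 < ptilde lam mu E :=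
  div_pos (by linarith) (by nlinarith)

theorem mul_ptilde_lt_one (hlam : 0 < lam) (hlm : mu < lam) (hE : 1 < E) :
    lam * ptilde lam mu E < 1 := by
  have h := one_sub_mul_ptilde (lam := lam) (mu := mu) (E := E) (by nlinarith)
  have : 0 < (lam - mu) / (lam * E - mu) := div_pos (by linarith) (by nlinarith)
  linarith

theorem one_sub_mul_ptilde_div_mul_log_le (hmu : 0 ≤ mu) (hlm : mu < lam) (hE : 2 ≤ E) :
    (1 - lam * ptilde lam mu E) / (lam * ptilde lam mu E) * -log (1 - lam * ptilde lam mu E)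
      ≤ 2 * (lam - mu) / (lam * E) * log (lam * E / (lam - mu)) := by
  have hlam : 0 < lam := hmu.trans_lt hlm
  have hr : 0 < lam - mu := sub_pos.2 hlm
  have hden : 0 < lam * E - mu := by nlinarith
  rw [one_sub_mul_ptilde_div_mul_ptilde hlam.ne' (by linarith) hden.ne',
    one_sub_mul_ptilde hden.ne', ← log_inv, inv_div]
  apply mul_le_mul
  · rw [div_le_div_iff₀ (by nlinarith) (by positivity)]
    nlinarith [mul_nonneg (mul_nonneg hr.le hlam.le) (sub_nonneg.2 hE)]
  · exact log_le_log (div_pos hden hr) (div_le_div_of_nonneg_right (by linarith) hr.le)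
  · exact log_nonneg ((le_div_iff₀ hr).2 (by nlinarith))
  · positivity

end ptilde

/-- Bound on `E[1/√Y_T | Y_T > 0]` for a supercritical linear birth-death
process at time `T ≥ log 2 / (λ−μ)`. -/
theorem bd_expected_reciprocal_sqrt (lam mu T : ℝ)
    (hmu : 0 ≤ mu) (hlm : mu < lam) (hT : Real.log 2 / (lam - mu) ≤ T) :
    let pt : ℝ := (Real.exp ((lam - mu) * T) - 1) / (lam * Real.exp ((lam - mu) * T) - mu)
    let p : ℕ → ℝ := fun n =>
      if n = 0 then mu * pt else (1 - mu * pt) * (1 - lam * pt) * (lam * pt) ^ (n - 1)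
    (∑' n : ℕ, p (n + 1) / Real.sqrt ((n : ℝ) + 1)) / (1 - p 0)
      ≤ Real.exp (-(lam - mu) * T / 2)
          * Real.sqrt ((2 * (lam - mu) / lam)
              * (Real.log (lam / (lam - mu)) + (lam - mu) * T)) := by
  intro pt p
  have hlam : 0 < lam := hmu.trans_lt hlm
  have hE2 : 2 ≤ exp ((lam - mu) * T) := by
    rw [← exp_log two_pos, mul_comm]
    exact exp_le_exp.2 ((div_le_iff₀ (sub_pos.2 hlm)).1 hT)
  have hpt : pt = ptilde lam mu (exp ((lam - mu) * T)) := rfl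
  have hpt0 : 0 < pt := hpt ▸ ptilde_pos hlam hlm (by linarith)
  have hq1 : lam * pt < 1 := hpt ▸ mul_ptilde_lt_one hlam hlm (by linarith)
  have hcond : (∑' n : ℕ, p (n + 1) / √((n : ℝ) + 1)) / (1 - p 0)
      = ∑' n : ℕ, (1 - lam * pt) * (lam * pt) ^ n / √((n : ℝ) + 1) := by
    have hY : 1 - mu * pt ≠ 0 := by nlinarith
    simp only [p, ↓reduceIte, Nat.add_one_ne_zero, Nat.add_sub_cancel, mul_assoc,
      mul_div_assoc, tsum_mul_left]
    field_simp
  have hlogE : log (lam * exp ((lam - mu) * T) / (lam - mu))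
      = log (lam / (lam - mu)) + (lam - mu) * T := by
    rw [mul_div_right_comm, log_mul (div_pos hlam (sub_pos.2 hlm)).ne' (exp_pos _).ne', log_exp]
  rw [hcond]
  calc _ ≤ √((1 - lam * pt) / (lam * pt) * -log (1 - lam * pt)) :=
        tsum_geometric_div_sqrt_succ_le (mul_pos hlam hpt0) hq1
    _ ≤ √(exp (-(lam - mu) * T) * (2 * (lam - mu) / lam
          * (log (lam / (lam - mu)) + (lam - mu) * T))) := by
        refine sqrt_le_sqrt ((hpt ▸ one_sub_mul_ptilde_div_mul_log_le hmu hlm hE2).trans_eq ?_)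
        rw [hlogE, neg_mul, exp_neg]
        field_simp
    _ = _ := by
        rw [sqrt_mul (exp_pos _).le, ← exp_half]
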